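/- Fix k̄ > 0 with k̄ ≠ k. For b and a/b sufficiently large, if ξ ∈ C¹([b,a]) with ξ(b) = k̄·ln b and ξ(a) = k·ln a, then ∫_b^a √(1 + ξ'²) r dr ≥ a²/2 − b²/2 + (1/2)·(k·ln a − k̄·ln b)²/(ln a − ln b) − C, where C is independent of a, b. -/

import Mathlib

/-!
For `|σ| ≤ r`, Cauchy–Schwarz applied to `(σ, √(r² - σ²))` and `(ξ', 1)` gives the
calibration inequality `σ ξ' + √(r² - σ²) ≤ r √(1 + ξ'²)`, with equality along the
catenoid of parameter `σ`. Bounding `√(r² - σ²)` below by `r - σ²/(2r) - σ⁴/(2r³)` makes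
the left side exactly integrable, so the area is at least
`σ (ξ a - ξ b) + a²/2 - b²/2 - (σ²/2) (ln a - ln b) - (σ⁴/4) (b⁻² - a⁻²)`.
The choice `σ = (k ln a - k̄ ln b)/(ln a - ln b)` turns the first and third terms into the
quadratic term of the claim. Since `|σ| ≤ |k| + |k - k̄| ln b` once `ln (a/b) ≥ 1`, we have
`σ² ≤ b` for large `b`, and then the error term is at most `1/4`.
-/

open MeasureTheory Real Set Filter Asymptotics

lemma mul_add_sqrt_sq_sub_sq_le {σ r : ℝ} (hr : 0 ≤ r) (hσ : σ ^ 2 ≤ r ^ 2) (t : ℝ) :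
    σ * t + √(r ^ 2 - σ ^ 2) ≤ r * √(1 + t ^ 2) := by
  have hs := sq_sqrt (sub_nonneg.2 hσ)
  have hu := sq_sqrt (by positivity : (0 : ℝ) ≤ 1 + t ^ 2)
  nlinarith [sq_nonneg (σ - √(r ^ 2 - σ ^ 2) * t), sqrt_nonneg (r ^ 2 - σ ^ 2),
    sqrt_nonneg (1 + t ^ 2), mul_nonneg hr (sqrt_nonneg (1 + t ^ 2))]

lemma sub_sub_le_sqrt_sq_sub_sq {σ r : ℝ} (hr : 0 < r) (hσ : σ ^ 2 ≤ r ^ 2) :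
    r - σ ^ 2 / (2 * r) - σ ^ 4 / (2 * r ^ 3) ≤ √(r ^ 2 - σ ^ 2) := by
  refine (le_abs_self _).trans (abs_le_sqrt ?_)
  have hdefect : 0 ≤ σ ^ 4 * ((r ^ 2 - σ ^ 2) * (3 * r ^ 2 + σ ^ 2)) := by
    have := sub_nonneg.2 hσ
    positivity
  have hcommon : r - σ ^ 2 / (2 * r) - σ ^ 4 / (2 * r ^ 3) =
      (2 * r ^ 4 - σ ^ 2 * r ^ 2 - σ ^ 4) / (2 * r ^ 3) := by
    field_simp
  rw [hcommon, div_pow, div_le_iff₀ (by positivity)]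
  linear_combination hdefect

lemma calibration_le {σ r : ℝ} (hr : 0 < r) (hσ : σ ^ 2 ≤ r ^ 2) (t : ℝ) :
    σ * t + (r - σ ^ 2 / (2 * r) - σ ^ 4 / (2 * r ^ 3)) ≤ √(1 + t ^ 2) * r := by
  linarith [mul_add_sqrt_sq_sub_sq_le hr.le hσ t, sub_sub_le_sqrt_sq_sub_sq hr hσ]

lemma hasDerivAt_calibration_potential {ξ : ℝ → ℝ} {t σ x : ℝ} (hξ : HasDerivAt ξ t x)
    (hx : x ≠ 0) :
    HasDerivAt (fun r => σ * ξ r + r ^ 2 / 2 - σ ^ 2 / 2 * log r + σ ^ 4 / 4 * (r ^ 2)⁻¹)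
      (σ * t + (x - σ ^ 2 / (2 * x) - σ ^ 4 / (2 * x ^ 3))) x := by
  refine ((((hξ.const_mul σ).add ((hasDerivAt_pow 2 x).div_const 2)).sub
    ((hasDerivAt_log hx).const_mul (σ ^ 2 / 2))).add
    (((hasDerivAt_pow 2 x).inv (pow_ne_zero 2 hx)).const_mul (σ ^ 4 / 4))).congr_deriv ?_
  field_simp
  ring

lemma integral_comp_deriv_eq_integral_comp_derivWithin_Icc (f : ℝ → ℝ) {a b : ℝ}
    (hba : b ≤ a) (F : ℝ → ℝ → ℝ) :
    ∫ r in b..a, F r (deriv f r) = ∫ r in b..a, F r (derivWithin f (Icc b a) r) := by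
  refine intervalIntegral.integral_congr_ae ?_
  filter_upwards [volume.ae_ne a] with r hra hr
  rw [uIoc_of_le hba] at hr
  rw [derivWithin_of_mem_nhds (Icc_mem_nhds hr.1 (lt_of_le_of_ne hr.2 hra))]

theorem calibration_le_integral {ξ : ℝ → ℝ} {σ a b : ℝ} (hb : 0 < b) (hba : b < a)
    (hσ : σ ^ 2 ≤ b ^ 2) (hξ : ContDiffOn ℝ 1 ξ (Icc b a)) :
    σ * (ξ a - ξ b) + (a ^ 2 / 2 - b ^ 2 / 2) - σ ^ 2 / 2 * (log a - log b)
        - σ ^ 4 / 4 * ((b ^ 2)⁻¹ - (a ^ 2)⁻¹) ≤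
      ∫ r in b..a, √(1 + deriv ξ r ^ 2) * r := by
  -- `deriv ξ` is junk at the endpoints; `g` is the derivative that is continuous on `[b, a]`.
  set g := derivWithin ξ (Icc b a)
  have hg : ContinuousOn g (Icc b a) :=
    hξ.continuousOn_derivWithin (uniqueDiffOn_Icc hba) le_rfl
  have hξ' : ContinuousOn ξ (Icc b a) := hξ.continuousOn
  have hderiv : ∀ x ∈ Ioo b a, HasDerivAt ξ (g x) x := fun x hx =>
    ((hξ.differentiableOn one_ne_zero x (Ioo_subset_Icc_self hx)).hasDerivWithinAt).hasDerivAt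
      (Icc_mem_nhds hx.1 hx.2)
  have hℓ : IntervalIntegrable (fun r => σ * g r + (r - σ ^ 2 / (2 * r) - σ ^ 4 / (2 * r ^ 3)))
      volume b a := ContinuousOn.intervalIntegrable_of_Icc hba.le
    (by fun_prop (disch := intro r h; rw [mem_Icc] at h; have := hb.trans_le h.1; positivity))
  have hFTC := intervalIntegral.integral_eq_sub_of_hasDerivAt_of_le hba.le
    (f := fun r => σ * ξ r + r ^ 2 / 2 - σ ^ 2 / 2 * log r + σ ^ 4 / 4 * (r ^ 2)⁻¹)
    (by fun_prop (disch := intro r h; rw [mem_Icc] at h; have := hb.trans_le h.1; positivity))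
    (fun x hx => hasDerivAt_calibration_potential (hderiv x hx) (hb.trans hx.1).ne') hℓ
  calc _ = ∫ r in b..a, σ * g r + (r - σ ^ 2 / (2 * r) - σ ^ 4 / (2 * r ^ 3)) := by
        rw [hFTC]; ring
    _ ≤ ∫ r in b..a, √(1 + g r ^ 2) * r :=
        intervalIntegral.integral_mono_on hba.le hℓ
          (ContinuousOn.intervalIntegrable_of_Icc hba.le (by fun_prop)) fun r hr =>
            calibration_le (hb.trans_le hr.1) (hσ.trans (pow_le_pow_left₀ hb.le hr.1 2)) (g r)
    _ = ∫ r in b..a, √(1 + deriv ξ r ^ 2) * r :=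
        (integral_comp_deriv_eq_integral_comp_derivWithin_Icc ξ hba.le
          fun r t => √(1 + t ^ 2) * r).symm

lemma pow_four_mul_inv_sq_sub_inv_sq_le_one {σ a b : ℝ} (hb : 0 < b) (hba : b ≤ a)
    (hσ : σ ^ 2 ≤ b) : σ ^ 4 * ((b ^ 2)⁻¹ - (a ^ 2)⁻¹) ≤ 1 :=
  calc σ ^ 4 * ((b ^ 2)⁻¹ - (a ^ 2)⁻¹) ≤ b ^ 2 * (b ^ 2)⁻¹ := by
        refine mul_le_mul ?_ (sub_le_self _ (by positivity)) ?_ (by positivity)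
        · nlinarith [sq_nonneg σ]
        · exact sub_nonneg.2 (inv_anti₀ (by positivity) (by gcongr))
    _ = 1 := mul_inv_cancel₀ (by positivity)

lemma eventually_sq_add_mul_log_le (c M : ℝ) : ∀ᶠ x in atTop, (c + M * log x) ^ 2 ≤ x := by
  have h : (fun x => (c + M * log x) ^ 2) =o[atTop] id := by
    have := (isLittleO_const_id_atTop (c ^ 2)).add
      ((isLittleO_log_id_atTop.const_mul_left (2 * c * M)).add
        ((isLittleO_pow_log_id_atTop (n := 2)).const_mul_left (M ^ 2)))
    refine this.congr_left fun x => ?_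
    ring
  filter_upwards [h.bound one_pos, eventually_ge_atTop 0] with x hx hx0
  simpa [abs_of_nonneg hx0] using hx

lemma abs_div_sub_log_le {k kbar a b : ℝ} (hb : 1 ≤ b) (hL : 1 ≤ log a - log b) :
    |(k * log a - kbar * log b) / (log a - log b)| ≤ |k| + |k - kbar| * log b := by
  have hL0 : 0 < log a - log b := one_pos.trans_le hL
  have hlogb : 0 ≤ log b := log_nonneg hb
  have h : (k * log a - kbar * log b) / (log a - log b)
      = k + (k - kbar) * (log b / (log a - log b)) := by
    field_simp
    ring
  have hq : |log b / (log a - log b)| ≤ log b := by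
    rw [abs_of_nonneg (by positivity)]
    exact div_le_self hlogb hL
  rw [h]
  calc |k + (k - kbar) * (log b / (log a - log b))|
      ≤ |k| + |k - kbar| * |log b / (log a - log b)| := by
        rw [← abs_mul]; exact abs_add_le _ _
    _ ≤ |k| + |k - kbar| * log b := by gcongr

theorem stmt_4_general (k kbar : ℝ) :
    ∃ C B : ℝ, ∀ a b : ℝ, ∀ ξ : ℝ → ℝ,
      B ≤ b → B ≤ a / b →
      ContDiffOn ℝ 1 ξ (Set.Icc b a) →
      ξ b = kbar * Real.log b → ξ a = k * Real.log a →
      a ^ 2 / 2 - b ^ 2 / 2 +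
          (k * Real.log a - kbar * Real.log b) ^ 2 / (2 * (Real.log a - Real.log b)) - C ≤
        ∫ r in b..a, Real.sqrt (1 + (deriv ξ r) ^ 2) * r := by
  obtain ⟨B₀, hB₀⟩ := eventually_atTop.1 (eventually_sq_add_mul_log_le |k| |k - kbar|)
  refine ⟨1 / 4, max B₀ (exp 1), fun a b ξ hb hab hξ hξb hξa => ?_⟩
  have hb1 : 1 ≤ b := (one_le_exp zero_le_one).trans (le_of_max_le_right hb)
  have hb0 : 0 < b := one_pos.trans_le hb1
  have hexp : exp 1 ≤ a / b := le_of_max_le_right hab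
  have hba : b < a := by
    rw [le_div_iff₀ hb0] at hexp
    nlinarith [add_one_lt_exp one_ne_zero]
  have hL : 1 ≤ log a - log b := by
    have ha0 := hb0.trans hba
    rwa [← log_div ha0.ne' hb0.ne', le_log_iff_exp_le (div_pos ha0 hb0)]
  set σ := (k * log a - kbar * log b) / (log a - log b) with hσ_def
  have hσ : σ ^ 2 ≤ b :=
    calc σ ^ 2 = |σ| ^ 2 := (sq_abs σ).symm
      _ ≤ (|k| + |k - kbar| * log b) ^ 2 := by gcongr; exact abs_div_sub_log_le hb1 hL
      _ ≤ b := hB₀ b (le_of_max_le_left hb)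
  have hcal := calibration_le_integral hb0 hba (hσ.trans (by nlinarith)) hξ
  have herr := pow_four_mul_inv_sq_sub_inv_sq_le_one hb0 hba.le hσ
  have hquad : σ * (k * log a - kbar * log b) - σ ^ 2 / 2 * (log a - log b) =
      (k * log a - kbar * log b) ^ 2 / (2 * (log a - log b)) := by
    rw [hσ_def]; field_simp; ring
  rw [hξa, hξb] at hcal
  linarith

/-- Fix k̄ > 0 with k̄ ≠ k. For b and a/b sufficiently large, if
ξ ∈ C¹([b,a]) with ξ(b) = k̄·ln b and ξ(a) = k·ln a, then
∫_b^a √(1 + ξ'²) r dr ≥ a²/2 − b²/2 + (1/2)·(k·ln a − k̄·ln b)²/(ln a − ln b) − C,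
where C is independent of a, b. -/
theorem stmt_4 (k kbar : ℝ) (hk : 0 < k) (hkbar : 0 < kbar) (hne : kbar ≠ k) :
    ∃ C B : ℝ, ∀ a b : ℝ, ∀ ξ : ℝ → ℝ,
      B ≤ b → B ≤ a / b →
      ContDiffOn ℝ 1 ξ (Set.Icc b a) →
      ξ b = kbar * Real.log b → ξ a = k * Real.log a →
      a ^ 2 / 2 - b ^ 2 / 2 +
          (k * Real.log a - kbar * Real.log b) ^ 2 / (2 * (Real.log a - Real.log b)) - C ≤
        ∫ r in b..a, Real.sqrt (1 + (deriv ξ r) ^ 2) * r :=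
  stmt_4_general k kbar
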